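/- arXiv:1607.07559 — 5 statements merged into one kernel-verified Lean document; each statement's English description precedes it below -/
import Mathlib

section
/- Let ψ : G → K be a homomorphism of finite groups, let H₀ ≤ H₁ be subgroups of K, and let k̃ ∈ K. Let R ⊆ K be a complete set of representatives for those double cosets ψ(G)·k·H₀ that are contained in the double coset ψ(G)·k̃·H₁. Then the following identity of rational numbers holds: ∑_{k ∈ R} [G : ψ⁻¹(k·H₀·k⁻¹)] / [K : H₀] = [G : ψ⁻¹(k̃·H₁·k̃⁻¹)] / [K : H₁], where for a subgroup L ≤ K the preimage ψ⁻¹(L) is a subgroup of G and all indices are cast to ℚ. -/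
/-!
Write `P = ψ(G)`. The stabilizer in `P` of the coset `kH ∈ K ⧸ H` is `P ∩ kHk⁻¹`, so by
orbit–stabilizer `[G : ψ⁻¹(kHk⁻¹)] = [P : P ∩ kHk⁻¹]` counts the left `H`-cosets in `P k H`, and
`[G : ψ⁻¹(kHk⁻¹)] / [K : H] = |P k H| / |K|`. The identity is then the count of the elements of
`P kt H₁`, which is the disjoint union of the `P k H₀` with `k ∈ R`.
-/

open DoubleCoset MulAction
open scoped Pointwise

lemma MulAction.stabilizer_quotient_mk {K : Type*} [Group K] (H : Subgroup K) (k : K) :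
    stabilizer K (k : K ⧸ H) = H.map (MulAut.conj k).toMonoidHom := by
  have : (k : K ⧸ H) = k • ((1 : K) : K ⧸ H) := by simp
  rw [this, stabilizer_smul_eq_stabilizer_map_conj, stabilizer_quotient]

namespace DoubleCoset

variable {K : Type*} [Group K]

lemma image_mk_mul_singleton (P H : Subgroup K) (k : K) :
    ((↑) '' ((P : Set K) * {k}) : Set (K ⧸ H)) = orbit P (k : K ⧸ H) := by
  rw [Set.mul_singleton, Set.image_image, Set.image_eq_range]
  rfl

lemma ncard_doubleCoset (P H : Subgroup K) (k : K) :
    (doubleCoset k P H).ncard = Nat.card H * (H.map (MulAut.conj k).toMonoidHom).relIndex P := by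
  have hstab : (H.map (MulAut.conj k).toMonoidHom).subgroupOf P = stabilizer P (k : K ⧸ H) := by
    ext p
    rw [Subgroup.mem_subgroupOf, ← stabilizer_quotient_mk, mem_stabilizer_iff, mem_stabilizer_iff]
    rfl
  rw [← Nat.card_coe_set_eq, doubleCoset, Subgroup.card_mul_eq_card_subgroup_mul_card_quotient,
    image_mk_mul_singleton, Nat.card_coe_set_eq, ← index_stabilizer, Subgroup.relIndex, hstab]

lemma doubleCoset_mono_right {P H₀ H₁ : Subgroup K} (hH : H₀ ≤ H₁) (k : K) :
    doubleCoset k P H₀ ⊆ doubleCoset k P H₁ :=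
  Set.mul_subset_mul_left hH

lemma doubleCoset_subset_of_mem {P H₀ H₁ : Subgroup K} (hH : H₀ ≤ H₁) {k x : K}
    (hx : x ∈ doubleCoset k P H₁) : doubleCoset x P H₀ ⊆ doubleCoset k P H₁ :=
  doubleCoset_eq_of_mem hx ▸ doubleCoset_mono_right hH x

lemma ncard_doubleCoset_eq_sum [Finite K] {P H₀ H₁ : Subgroup K} (hH : H₀ ≤ H₁) {kt : K}
    {R : Finset K} (hmem : ∀ k ∈ R, doubleCoset k P H₀ ⊆ doubleCoset kt P H₁)
    (hinj : ∀ k ∈ R, ∀ k' ∈ R, doubleCoset k P H₀ = doubleCoset k' P H₀ → k = k')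
    (hsurj : ∀ k, doubleCoset k P H₀ ⊆ doubleCoset kt P H₁ →
      ∃ k' ∈ R, doubleCoset k P H₀ = doubleCoset k' P H₀) :
    (doubleCoset kt P H₁).ncard = ∑ k ∈ R, (doubleCoset k P H₀).ncard := by
  have hunion : doubleCoset kt P H₁ = ⋃ k ∈ (R : Set K), doubleCoset k P H₀ := by
    refine subset_antisymm (fun x hx => ?_) (Set.iUnion₂_subset hmem)
    obtain ⟨k, hk, hxk⟩ := hsurj x (doubleCoset_subset_of_mem hH hx)
    exact Set.mem_biUnion (Finset.mem_coe.2 hk) (hxk ▸ mem_doubleCoset_self P H₀ x)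
  have hdisj : (R : Set K).PairwiseDisjoint (doubleCoset · P H₀) :=
    fun k hk k' hk' hne => not_not.1 fun h => hne (hinj k hk k' hk' (eq_of_not_disjoint h))
  rw [hunion, R.finite_toSet.ncard_biUnion (fun _ _ => Set.toFinite _) hdisj,
    finsum_mem_coe_finset]

lemma doubleCoset_range_eq_setOf {G : Type*} [Group G] (ψ : G →* K) (H : Subgroup K) (k : K) :
    doubleCoset k ψ.range H = {x : K | ∃ g : G, ∃ h ∈ H, x = ψ g * k * h} := by
  ext x
  simp [mem_doubleCoset]

lemma index_comap_conj_div_index [Finite K] {G : Type*} [Group G] (ψ : G →* K)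
    (H : Subgroup K) (k : K) :
    (((H.map (MulAut.conj k).toMonoidHom).comap ψ).index / H.index : ℚ)
      = (doubleCoset k ψ.range H).ncard / Nat.card K := by
  have hH : (Nat.card H : ℚ) ≠ 0 := by exact_mod_cast Nat.card_pos.ne'
  rw [Subgroup.index_comap, ncard_doubleCoset, ← H.card_mul_index]
  push_cast
  rw [mul_div_mul_left _ _ hH]

end DoubleCoset

theorem doubleCoset_index_sum_general {G K : Type*} [Group G] [Group K] [Fintype K]
    (ψ : G →* K) (H₀ H₁ : Subgroup K) (hH : H₀ ≤ H₁) (kt : K)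
    (D : K → Subgroup K → Set K)
    (hD : ∀ (k : K) (H : Subgroup K), D k H = {x : K | ∃ g : G, ∃ h ∈ H, x = ψ g * k * h})
    (R : Finset K)
    (hmem : ∀ k ∈ R, D k H₀ ⊆ D kt H₁)
    (hinj : ∀ k ∈ R, ∀ k' ∈ R, D k H₀ = D k' H₀ → k = k')
    (hsurj : ∀ k : K, D k H₀ ⊆ D kt H₁ → ∃ k' ∈ R, D k H₀ = D k' H₀) :
    ∑ k ∈ R,
        ((Subgroup.comap ψ (Subgroup.map (MulAut.conj k).toMonoidHom H₀)).index : ℚ)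
          / (H₀.index : ℚ)
      = ((Subgroup.comap ψ (Subgroup.map (MulAut.conj kt).toMonoidHom H₁)).index : ℚ)
          / (H₁.index : ℚ) := by
  have hD' : ∀ k H, D k H = doubleCoset k ψ.range H := fun k H =>
    (hD k H).trans (doubleCoset_range_eq_setOf ψ H k).symm
  simp only [hD'] at hmem hinj hsurj
  simp only [index_comap_conj_div_index, ← Finset.sum_div]
  rw [ncard_doubleCoset_eq_sum hH hmem hinj hsurj, Nat.cast_sum]

/-- Let `ψ : G → K` be a homomorphism of finite groups, `H₀ ≤ H₁`
subgroups of `K`, and `kt ∈ K`.  Let `R ⊆ K` be a complete set of representatives for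
those double cosets `ψ(G)·k·H₀` that are contained in the double coset `ψ(G)·kt·H₁`.
Then `∑_{k ∈ R} [G : ψ⁻¹(kH₀k⁻¹)] / [K : H₀] = [G : ψ⁻¹(kt·H₁·kt⁻¹)] / [K : H₁]` in `ℚ`. -/
theorem doubleCoset_index_sum {G K : Type*} [Group G] [Fintype G] [Group K] [Fintype K]
    (ψ : G →* K) (H₀ H₁ : Subgroup K) (hH : H₀ ≤ H₁) (kt : K)
    (D : K → Subgroup K → Set K)
    (hD : ∀ (k : K) (H : Subgroup K), D k H = {x : K | ∃ g : G, ∃ h ∈ H, x = ψ g * k * h})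
    (R : Finset K)
    (hmem : ∀ k ∈ R, D k H₀ ⊆ D kt H₁)
    (hinj : ∀ k ∈ R, ∀ k' ∈ R, D k H₀ = D k' H₀ → k = k')
    (hsurj : ∀ k : K, D k H₀ ⊆ D kt H₁ → ∃ k' ∈ R, D k H₀ = D k' H₀) :
    ∑ k ∈ R,
        ((Subgroup.comap ψ (Subgroup.map (MulAut.conj k).toMonoidHom H₀)).index : ℚ)
          / (H₀.index : ℚ)
      = ((Subgroup.comap ψ (Subgroup.map (MulAut.conj kt).toMonoidHom H₁)).index : ℚ)
          / (H₁.index : ℚ) :=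
  doubleCoset_index_sum_general ψ H₀ H₁ hH kt D hD R hmem hinj hsurj
end

section
/- Let G be a finite group, H a proper subgroup of G, and g₀ ∈ G. Let x ∈ ℝ^G (with the standard Euclidean inner product) be a vector with ‖x‖ = 1 whose g-coordinate vanishes for every g ∉ g₀H (i.e., x is supported on the coset g₀H). Let e_G ∈ ℝ^G be the vector all of whose coordinates equal 1/√|G|. Then for every t ∈ ℝ one has ‖x + t·e_G‖² ≥ 1/2. -/
/-!
Since `e_G` is a unit vector, `‖x + t e_G‖² = 1 + 2t⟪x, e_G⟫ + t² ≥ 1 - ⟪x, e_G⟫²`. By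
Cauchy–Schwarz on the support `g₀H` of `x`, `⟪x, e_G⟫² ≤ |H| / |G|`, and `|H| ≤ |G| / 2`
because a proper subgroup has index at least 2.
-/
open Finset RealInnerProductSpace

theorem norm_sq_sub_inner_sq_le_norm_add_smul_sq {E : Type*} [NormedAddCommGroup E]
    [InnerProductSpace ℝ E] {e : E} (he : ‖e‖ = 1) (x : E) (t : ℝ) :
    ‖x‖ ^ 2 - ⟪x, e⟫ ^ 2 ≤ ‖x + t • e‖ ^ 2 := by
  have hexpand : ‖x + t • e‖ ^ 2 = ‖x‖ ^ 2 + 2 * t * ⟪x, e⟫ + t ^ 2 := by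
    rw [norm_add_sq_real, inner_smul_right, norm_smul, mul_pow, he, Real.norm_eq_abs, sq_abs]
    ring
  nlinarith [hexpand, sq_nonneg (t + ⟪x, e⟫)]

theorem EuclideanSpace.inner_sq_le_of_support_subset {ι : Type*} [Fintype ι]
    {x : EuclideanSpace ℝ ι} {s : Finset ι} (hx : ∀ i ∉ s, x i = 0) (y : EuclideanSpace ℝ ι) :
    ⟪x, y⟫ ^ 2 ≤ ‖x‖ ^ 2 * ∑ i ∈ s, y i ^ 2 := by
  have hinner : ⟪x, y⟫ = ∑ i ∈ s, x i * y i := by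
    rw [PiLp.inner_apply, ← sum_subset (subset_univ s) fun i _ hi => by simp [hx i hi]]
    simp [mul_comm]
  have hnorm : ∑ i ∈ s, x i ^ 2 ≤ ‖x‖ ^ 2 := by
    rw [EuclideanSpace.norm_sq_eq]
    simpa using sum_le_sum_of_subset_of_nonneg (subset_univ s) fun i _ _ => sq_nonneg (x i)
  rw [hinner]
  exact (sum_mul_sq_le_sq_mul_sq s x y).trans
    (mul_le_mul_of_nonneg_right hnorm (sum_nonneg fun i _ => sq_nonneg _))

theorem Subgroup.two_mul_card_le_card_of_ne_top {G : Type*} [Group G] [Finite G]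
    {H : Subgroup G} (hH : H ≠ ⊤) : 2 * Nat.card H ≤ Nat.card G := by
  rw [← H.index_mul_card]
  exact Nat.mul_le_mul_right _ (H.one_lt_index_of_ne_top hH)

theorem Subgroup.card_filter_inv_mul_mem {G : Type*} [Group G] [Fintype G]
    (H : Subgroup G) [DecidablePred (· ∈ H)] (g₀ : G) :
    #{g | g₀⁻¹ * g ∈ H} = Nat.card H := by
  have hcoset : ({g | g₀⁻¹ * g ∈ H} : Finset G) =
      ({g | g ∈ H} : Finset G).map (Equiv.mulLeft g₀).toEmbedding := by
    ext g
    simp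
  rw [hcoset, card_map, Nat.card_eq_fintype_card, Fintype.card_subtype]

/-- Let `G` be a finite group, `H` a proper subgroup, `g₀ ∈ G`.
If `x ∈ ℝ^G` is a unit vector supported on the coset `g₀H`, and `e_G ∈ ℝ^G` is the
vector all of whose coordinates are `1/√|G|`, then `‖x + t·e_G‖² ≥ 1/2` for all `t ∈ ℝ`. -/
theorem norm_sq_ge_half_of_supported_on_proper_coset {G : Type*} [Group G] [Fintype G]
    (H : Subgroup G) (hH : H ≠ ⊤) (g₀ : G)
    (x : EuclideanSpace ℝ G) (hx : ‖x‖ = 1)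
    (hsupp : ∀ g : G, g₀⁻¹ * g ∉ H → x g = 0)
    (eG : EuclideanSpace ℝ G) (heG : ∀ g : G, eG g = 1 / Real.sqrt (Fintype.card G)) :
    ∀ t : ℝ, 1 / 2 ≤ ‖x + t • eG‖ ^ 2 := by
  intro t
  classical
  have hcard : (0 : ℝ) < Fintype.card G := by exact_mod_cast Fintype.card_pos
  have hsum_eG (s : Finset G) : ∑ g ∈ s, eG g ^ 2 = #s / Fintype.card G := by
    simp [heG, Real.sq_sqrt hcard.le, div_eq_mul_inv]
  have heG_norm : ‖eG‖ = 1 := by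
    rw [EuclideanSpace.norm_eq, Real.sqrt_eq_one]
    simpa [hcard.ne'] using hsum_eG univ
  have hcoset : 2 * (#{g | g₀⁻¹ * g ∈ H} : ℝ) ≤ Fintype.card G := by
    rw [H.card_filter_inv_mul_mem, ← Nat.card_eq_fintype_card]
    exact_mod_cast H.two_mul_card_le_card_of_ne_top hH
  have hinner : ⟪x, eG⟫ ^ 2 ≤ 1 / 2 := calc
    ⟪x, eG⟫ ^ 2 ≤ ‖x‖ ^ 2 * ∑ g ∈ {g | g₀⁻¹ * g ∈ H}, eG g ^ 2 :=
      EuclideanSpace.inner_sq_le_of_support_subset (by simpa using hsupp) eG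
    _ = #{g | g₀⁻¹ * g ∈ H} / Fintype.card G := by rw [hx, hsum_eG, one_pow, one_mul]
    _ ≤ 1 / 2 := by rw [div_le_div_iff₀ hcard two_pos]; linarith
  calc 1 / 2 ≤ ‖x‖ ^ 2 - ⟪x, eG⟫ ^ 2 := by rw [hx]; linarith
    _ ≤ ‖x + t • eG‖ ^ 2 := norm_sq_sub_inner_sq_le_norm_add_smul_sq heG_norm x t
end

section
/- Let l ≥ 1 and m ≥ 1 be natural numbers. Let S ⊆ ℝ^l × ℝ^l be the set of pairs of tuples (a, b) = ((a₁,…,a_l), (b₁,…,b_l)) such that: (1) 0 ≤ aᵢ < bᵢ ≤ 1 for all i; (2) the pairs are lexicographically ordered, i.e., aᵢ ≤ a_{i+1} for all i, and bᵢ ≤ b_{i+1} whenever aᵢ = a_{i+1}; and (3) every t ∈ (0,1) lies in the open interval (aᵢ, bᵢ) for at most m indices i. Then S is star-shaped with respect to the point c ∈ S with cᵢ = ((i−1)/l, i/l), i.e., for every (a,b) ∈ S and every s ∈ [0,1], the convex combination s·(a,b) + (1−s)·c lies in S. -/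
/-!
Moving a tuple `(a, b)` towards `c` changes the endpoints convexly, and since the left endpoints
of `c` strictly increase, a proper combination is even strictly lexicographically ordered.
For the overlap bound, let `F` be the indices whose combined intervals contain `t`. When the
intervals of `c` are disjoint and in increasing order, the original intervals `(aᵢ, bᵢ)`,
`i ∈ F`, pairwise intersect: for `i ≤ j` because `aᵢ ≤ aⱼ < bⱼ`, and for `j < i` because the
`c`-parts of the two combined intervals only push them apart. By the one-dimensional Helly
theorem they share a point `u ∈ (0, 1)`, so `#F` is at most the number of intervals through `u`.
-/

open Finset

lemma Fin.monotone_of_le_succ {α : Type*} [Preorder α] {l : ℕ} {f : Fin l → α}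
    (h : ∀ (i : Fin l) (hi : (i : ℕ) + 1 < l), f i ≤ f ⟨i + 1, hi⟩) : Monotone f := by
  cases l with
  | zero => exact fun i => i.elim0
  | succ n => exact Fin.monotone_iff_le_succ.2 fun i => h (Fin.castSucc i) (by simp)

lemma Finset.exists_forall_lt_lt_of_lt {ι α : Type*} [LinearOrder α] [DenselyOrdered α]
    {F : Finset ι} (hF : F.Nonempty) {a b : ι → α} (h : ∀ i ∈ F, ∀ j ∈ F, a i < b j) :
    ∃ u, ∀ i ∈ F, a i < u ∧ u < b i := by
  obtain ⟨u, hau, hub⟩ := Finset.exists_between (hF.image a) (hF.image b) (by simpa using h)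
  exact ⟨u, fun i hi => ⟨hau _ (mem_image_of_mem a hi), hub _ (mem_image_of_mem b hi)⟩⟩

lemma card_filter_lt_lt_le_one_of_disjoint {ι : Type*} [Fintype ι] [LinearOrder ι] {c d : ι → ℝ}
    (hcd : ∀ i j, i < j → d i ≤ c j) (t : ℝ) : #{i | c i < t ∧ t < d i} ≤ 1 := by
  refine card_le_one.2 fun i hi j hj => ?_
  simp only [mem_filter, mem_univ, true_and] at hi hj
  rcases lt_trichotomy i j with h | h | h
  · linarith [hcd i j h]
  · exact h
  · linarith [hcd j i h]

lemma strictMono_of_disjoint {ι : Type*} [Preorder ι] {c d : ι → ℝ} (hcd : ∀ i, c i < d i)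
    (hdisj : ∀ i j, i < j → d i ≤ c j) : StrictMono c :=
  fun i j hij => (hcd i).trans_le (hdisj i j hij)

lemma convex_combo_endpoints {x y x' y' s : ℝ} (h : 0 ≤ x ∧ x < y ∧ y ≤ 1)
    (h' : 0 ≤ x' ∧ x' < y' ∧ y' ≤ 1) (hs0 : 0 ≤ s) (hs1 : s ≤ 1) :
    0 ≤ s * x + (1 - s) * x' ∧ s * x + (1 - s) * x' < s * y + (1 - s) * y' ∧
      s * y + (1 - s) * y' ≤ 1 := by
  obtain ⟨hx, hxy, hy⟩ := h
  obtain ⟨hx', hxy', hy'⟩ := h'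
  have hs1' : 0 ≤ 1 - s := sub_nonneg.2 hs1
  refine ⟨by positivity, ?_, by nlinarith⟩
  rcases hs0.eq_or_lt with rfl | hs
  · simpa using hxy'
  · nlinarith

lemma convex_combo_lexStep {a₁ a₂ b₁ b₂ c₁ c₂ d₁ d₂ s : ℝ}
    (h : a₁ ≤ a₂ ∧ (a₁ = a₂ → b₁ ≤ b₂)) (hc : c₁ < c₂) (hs0 : 0 ≤ s) (hs1 : s ≤ 1) :
    s * a₁ + (1 - s) * c₁ ≤ s * a₂ + (1 - s) * c₂ ∧
      (s * a₁ + (1 - s) * c₁ = s * a₂ + (1 - s) * c₂ →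
        s * b₁ + (1 - s) * d₁ ≤ s * b₂ + (1 - s) * d₂) := by
  have ha : s * a₁ ≤ s * a₂ := mul_le_mul_of_nonneg_left h.1 hs0
  refine ⟨by nlinarith, fun heq => ?_⟩
  rcases hs1.eq_or_lt with rfl | hs1
  · simp only [one_mul, sub_self, zero_mul, add_zero] at heq ⊢
    exact h.2 heq
  · have hc' : (1 - s) * c₁ < (1 - s) * c₂ := mul_lt_mul_of_pos_left hc (sub_pos.2 hs1)
    linarith

lemma card_filter_convex_combo_le {ι : Type*} [Fintype ι] [LinearOrder ι] {a b c d : ι → ℝ}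
    {m : ℕ} (ha : Monotone a) (hab : ∀ i, 0 ≤ a i ∧ a i < b i ∧ b i ≤ 1)
    (hm : ∀ t : ℝ, 0 < t → t < 1 → #{i | a i < t ∧ t < b i} ≤ m)
    (hcd : ∀ i j, i < j → d i ≤ c j) {s : ℝ} (hs0 : 0 < s) (hs1 : s ≤ 1) (t : ℝ) :
    #{i | s * a i + (1 - s) * c i < t ∧ t < s * b i + (1 - s) * d i} ≤ m := by
  set F := ({i | s * a i + (1 - s) * c i < t ∧ t < s * b i + (1 - s) * d i} : Finset ι)
  rcases F.eq_empty_or_nonempty with hF | hF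
  · simp [hF]
  have hpair : ∀ i ∈ F, ∀ j ∈ F, a i < b j := by
    intro i hi j hj
    simp only [F, mem_filter, mem_univ, true_and] at hi hj
    rcases le_or_gt i j with hij | hji
    · exact (ha hij).trans_lt (hab j).2.1
    · have := mul_le_mul_of_nonneg_left (hcd j i hji) (sub_nonneg.2 hs1)
      exact lt_of_mul_lt_mul_left (by linarith) hs0.le
  obtain ⟨u, hu⟩ := exists_forall_lt_lt_of_lt hF hpair
  obtain ⟨i, hi⟩ := hF
  have hF_sub : F ⊆ ({i | a i < u ∧ u < b i} : Finset ι) := fun j hj => by simpa using hu j hj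
  exact (card_le_card hF_sub).trans
    (hm u ((hab i).1.trans_lt (hu i hi).1) ((hu i hi).2.trans_le (hab i).2.2))

def IsOrderedIntervalTuple {l : ℕ} (m : ℕ) (a b : Fin l → ℝ) : Prop :=
  (∀ i, 0 ≤ a i ∧ a i < b i ∧ b i ≤ 1) ∧
    (∀ (i : Fin l) (h : (i : ℕ) + 1 < l),
      a i ≤ a ⟨i + 1, h⟩ ∧ (a i = a ⟨i + 1, h⟩ → b i ≤ b ⟨i + 1, h⟩)) ∧
    ∀ t : ℝ, 0 < t → t < 1 → #{i | a i < t ∧ t < b i} ≤ m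

namespace IsOrderedIntervalTuple

variable {l m : ℕ} {a b c d : Fin l → ℝ}

lemma of_disjoint (hm : 1 ≤ m) (hcd : ∀ i, 0 ≤ c i ∧ c i < d i ∧ d i ≤ 1)
    (hdisj : ∀ i j, i < j → d i ≤ c j) : IsOrderedIntervalTuple m c d := by
  refine ⟨hcd, fun i h => ?_, fun t _ _ => (card_filter_lt_lt_le_one_of_disjoint hdisj t).trans hm⟩
  have hlt : c i < c ⟨i + 1, h⟩ :=
    strictMono_of_disjoint (fun i => (hcd i).2.1) hdisj (Fin.lt_def.2 (Nat.lt_succ_self _))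
  exact ⟨hlt.le, fun heq => absurd heq hlt.ne⟩

lemma convex_combo (hab : IsOrderedIntervalTuple m a b) (hcd : IsOrderedIntervalTuple m c d)
    (hdisj : ∀ i j, i < j → d i ≤ c j) {s : ℝ} (hs0 : 0 ≤ s) (hs1 : s ≤ 1) :
    IsOrderedIntervalTuple m (s • a + (1 - s) • c) (s • b + (1 - s) • d) := by
  obtain ⟨hab₁, hab₂, hab₃⟩ := hab
  obtain ⟨hcd₁, -, hcd₃⟩ := hcd
  simp only [IsOrderedIntervalTuple, Pi.add_apply, Pi.smul_apply, smul_eq_mul]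
  refine ⟨fun i => convex_combo_endpoints (hab₁ i) (hcd₁ i) hs0 hs1, fun i h => ?_, ?_⟩
  · have hc : c i < c ⟨i + 1, h⟩ :=
      strictMono_of_disjoint (fun i => (hcd₁ i).2.1) hdisj (Fin.lt_def.2 (Nat.lt_succ_self _))
    exact convex_combo_lexStep (hab₂ i h) hc hs0 hs1
  · rcases hs0.eq_or_lt with rfl | hs0
    · simpa using hcd₃
    · exact fun t _ _ => card_filter_convex_combo_le
        (Fin.monotone_of_le_succ fun i h => (hab₂ i h).1) hab₁ hab₃ hdisj hs0 hs1 t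

end IsOrderedIntervalTuple

lemma unitSubinterval_mem {l : ℕ} (i : Fin l) :
    0 ≤ (i : ℝ) / l ∧ (i : ℝ) / l < ((i : ℝ) + 1) / l ∧ ((i : ℝ) + 1) / l ≤ 1 := by
  have hl : (0 : ℝ) < l := by exact_mod_cast i.pos
  have hi : (i : ℝ) + 1 ≤ l := by exact_mod_cast i.2
  refine ⟨by positivity, div_lt_div_of_pos_right (lt_add_one _) hl, (div_le_one hl).2 hi⟩

lemma unitSubinterval_disjoint {l : ℕ} {i j : Fin l} (h : i < j) :
    ((i : ℝ) + 1) / l ≤ (j : ℝ) / l := by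
  have hl : (0 : ℝ) < l := by exact_mod_cast i.pos
  have hij : (i : ℝ) + 1 ≤ j := by exact_mod_cast Fin.lt_def.1 h
  exact div_le_div_of_nonneg_right hij hl.le

theorem intervalTuples_starShaped_general (l m : ℕ) (hm : 1 ≤ m)
    (S : Set ((Fin l → ℝ) × (Fin l → ℝ)))
    (hS : ∀ p : (Fin l → ℝ) × (Fin l → ℝ), p ∈ S ↔
      ((∀ i, 0 ≤ p.1 i ∧ p.1 i < p.2 i ∧ p.2 i ≤ 1) ∧
       (∀ (i : Fin l) (h : (i : ℕ) + 1 < l),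
         p.1 i ≤ p.1 ⟨(i : ℕ) + 1, h⟩ ∧
           (p.1 i = p.1 ⟨(i : ℕ) + 1, h⟩ → p.2 i ≤ p.2 ⟨(i : ℕ) + 1, h⟩)) ∧
       (∀ t : ℝ, 0 < t → t < 1 →
         (Finset.univ.filter fun i => p.1 i < t ∧ t < p.2 i).card ≤ m)))
    (c : (Fin l → ℝ) × (Fin l → ℝ))
    (hc : c = (fun i : Fin l => ((i : ℕ) : ℝ) / (l : ℝ), fun i : Fin l => (((i : ℕ) : ℝ) + 1) / (l : ℝ))) :
    c ∈ S ∧ ∀ p ∈ S, ∀ s : ℝ, 0 ≤ s → s ≤ 1 →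
      (s • p.1 + (1 - s) • c.1, s • p.2 + (1 - s) • c.2) ∈ S := by
  have hdisj : ∀ i j : Fin l, i < j → c.2 i ≤ c.1 j := by
    subst hc
    exact fun i j => unitSubinterval_disjoint
  have hcS : IsOrderedIntervalTuple m c.1 c.2 := by
    subst hc
    exact .of_disjoint hm unitSubinterval_mem hdisj
  exact ⟨(hS c).2 hcS, fun p hp s hs0 hs1 =>
    (hS _).2 (IsOrderedIntervalTuple.convex_combo ((hS p).1 hp) hcS hdisj hs0 hs1)⟩

/-- The set `S` of lexicographically ordered `l`-tuples of pairs
`(aᵢ, bᵢ)` with `0 ≤ aᵢ < bᵢ ≤ 1` such that every `t ∈ (0,1)` lies in at most `m` of the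
open intervals `(aᵢ, bᵢ)` is star-shaped with respect to the point
`c = (((i−1)/l, i/l))ᵢ` (zero-indexed: `cᵢ = (i/l, (i+1)/l)`). -/
theorem intervalTuples_starShaped (l m : ℕ) (hl : 1 ≤ l) (hm : 1 ≤ m)
    (S : Set ((Fin l → ℝ) × (Fin l → ℝ)))
    (hS : ∀ p : (Fin l → ℝ) × (Fin l → ℝ), p ∈ S ↔
      ((∀ i, 0 ≤ p.1 i ∧ p.1 i < p.2 i ∧ p.2 i ≤ 1) ∧
       (∀ (i : Fin l) (h : (i : ℕ) + 1 < l),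
         p.1 i ≤ p.1 ⟨(i : ℕ) + 1, h⟩ ∧
           (p.1 i = p.1 ⟨(i : ℕ) + 1, h⟩ → p.2 i ≤ p.2 ⟨(i : ℕ) + 1, h⟩)) ∧
       (∀ t : ℝ, 0 < t → t < 1 →
         (Finset.univ.filter fun i => p.1 i < t ∧ t < p.2 i).card ≤ m)))
    (c : (Fin l → ℝ) × (Fin l → ℝ))
    (hc : c = (fun i : Fin l => ((i : ℕ) : ℝ) / (l : ℝ), fun i : Fin l => (((i : ℕ) : ℝ) + 1) / (l : ℝ))) :
    c ∈ S ∧ ∀ p ∈ S, ∀ s : ℝ, 0 ≤ s → s ≤ 1 →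
      (s • p.1 + (1 - s) • c.1, s • p.2 + (1 - s) • c.2) ∈ S :=
  intervalTuples_starShaped_general l m hm S hS c hc
end

section
/- Let G be a finite group and k ≥ 0. Call a chain K₀ ≤ K₁ ≤ ⋯ ≤ K_k = Q of subgroups of a group Q 'simple' if the normal core of K₀ in Q (the largest normal subgroup of Q contained in K₀, equivalently the intersection of all Q-conjugates of K₀) is trivial. Then the assignment sending a pair (N, K₀ ≤ ⋯ ≤ K_k = G/N) — where N is a normal subgroup of G and K₀ ≤ ⋯ ≤ K_k = G/N is a simple chain of subgroups of G/N — to the chain π⁻¹(K₀) ≤ ⋯ ≤ π⁻¹(K_k) = G of subgroups of G (π : G → G/N the quotient map) is a bijection onto the set of all chains H₀ ≤ ⋯ ≤ H_k = G of subgroups of G ending in G. The inverse sends a chain H₀ ≤ ⋯ ≤ H_k = G to the pair consisting of N = the normal core of H₀ in G and the chain of images of the Hᵢ in G/N. Moreover this bijection preserves the total index: [G/N : K₀] = [G : π⁻¹(K₀)]. -/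
/-- A pair consisting of a normal subgroup `N` of `G` and a *simple* chain
`K₀ ≤ ⋯ ≤ K_k = ⊤` of subgroups of `G ⧸ N`, where "simple" means that the normal core
of `K₀` in `G ⧸ N` is trivial. -/
structure SimpleChainPair (G : Type*) [Group G] (k : ℕ) where
  N : Subgroup G
  [normal : N.Normal]
  chain : Fin (k + 1) → Subgroup (G ⧸ N)
  mono : Monotone chain
  top : chain (Fin.last k) = ⊤
  simple : (chain 0).normalCore = ⊥

attribute [instance] SimpleChainPair.normal

/-!
Pulling back along the quotient map `π : G → G/N` commutes with taking normal cores, so a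
chain in `G/N` with trivial core pulls back to a chain whose smallest member has core exactly
`N`. Conversely, every member of a chain `H₀ ≤ ⋯ ≤ H_k` contains `N := core(H₀)`, so the chain
is recovered as the preimage of its image in `G/N`, and that image has trivial core again.
-/

namespace Subgroup

theorem normalCore_comap_of_surjective {G Q : Type*} [Group G] [Group Q] {f : G →* Q}
    (hf : Function.Surjective f) (K : Subgroup Q) :
    (K.comap f).normalCore = K.normalCore.comap f := by
  apply le_antisymm
  · have : ((K.comap f).normalCore.map f).Normal := (normalCore_normal _).map f hf
    have hmap : (K.comap f).normalCore.map f ≤ K.normalCore :=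
      normal_le_normalCore.mpr (map_le_iff_le_comap.mpr (normalCore_le _))
    exact (le_comap_map f _).trans (comap_mono hmap)
  · have : (K.normalCore.comap f).Normal := (normalCore_normal _).comap f
    exact normal_le_normalCore.mpr (comap_mono (normalCore_le _))

end Subgroup

namespace SimpleChainPair

variable {G : Type*} [Group G] {k : ℕ}

def preimage (p : SimpleChainPair G k) (i : Fin (k + 1)) : Subgroup G :=
  (p.chain i).comap (QuotientGroup.mk' p.N)

theorem monotone_preimage (p : SimpleChainPair G k) : Monotone p.preimage :=
  fun _ _ hij => Subgroup.comap_mono (p.mono hij)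

theorem preimage_last (p : SimpleChainPair G k) : p.preimage (Fin.last k) = ⊤ := by
  rw [preimage, p.top, Subgroup.comap_top]

theorem N_eq_normalCore_preimage_zero (p : SimpleChainPair G k) :
    p.N = (p.preimage 0).normalCore := by
  rw [preimage, Subgroup.normalCore_comap_of_surjective (QuotientGroup.mk'_surjective p.N),
    p.simple, MonoidHom.comap_bot, QuotientGroup.ker_mk']

theorem index_chain_zero (p : SimpleChainPair G k) :
    (p.chain 0).index = (p.preimage 0).index :=
  (Subgroup.index_comap_of_surjective _ (QuotientGroup.mk'_surjective p.N)).symm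

theorem preimage_injective : Function.Injective (preimage (G := G) (k := k)) := by
  intro p q hpq
  have hN : p.N = q.N := by
    rw [N_eq_normalCore_preimage_zero, N_eq_normalCore_preimage_zero, hpq]
  rcases p with ⟨N, c⟩
  rcases q with ⟨N', c'⟩
  subst hN
  obtain rfl : c = c' := funext fun i =>
    Subgroup.comap_injective (QuotientGroup.mk'_surjective N) (congrFun hpq i)
  rfl

theorem comap_map_mk'_normalCore {C : Fin (k + 1) → Subgroup G} (hmono : Monotone C)
    (i : Fin (k + 1)) :
    ((C i).map (QuotientGroup.mk' (C 0).normalCore)).comap (QuotientGroup.mk' (C 0).normalCore)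
      = C i := by
  rw [QuotientGroup.comap_map_mk', sup_eq_right]
  exact (Subgroup.normalCore_le _).trans (hmono (Fin.zero_le i))

def ofChain (C : Fin (k + 1) → Subgroup G) (hmono : Monotone C) (htop : C (Fin.last k) = ⊤) :
    SimpleChainPair G k where
  N := (C 0).normalCore
  normal := Subgroup.normalCore_normal _
  chain i := (C i).map (QuotientGroup.mk' (C 0).normalCore)
  mono _ _ hij := Subgroup.map_mono (hmono hij)
  top := by
    rw [htop]
    exact Subgroup.map_top_of_surjective _ (QuotientGroup.mk'_surjective _)
  simple := by
    have hsurj := QuotientGroup.mk'_surjective (C 0).normalCore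
    apply Subgroup.comap_injective hsurj
    rw [← Subgroup.normalCore_comap_of_surjective hsurj, comap_map_mk'_normalCore hmono,
      MonoidHom.comap_bot, QuotientGroup.ker_mk']

theorem preimage_ofChain (C : Fin (k + 1) → Subgroup G) (hmono : Monotone C)
    (htop : C (Fin.last k) = ⊤) : (ofChain C hmono htop).preimage = C :=
  funext (comap_map_mk'_normalCore hmono)

end SimpleChainPair

theorem simpleChainPair_bijection_general {G : Type*} [Group G] (k : ℕ)
    (F : SimpleChainPair G k → (Fin (k + 1) → Subgroup G))
    (hF : ∀ (p : SimpleChainPair G k) (i : Fin (k + 1)),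
      F p i = (p.chain i).comap (QuotientGroup.mk' p.N)) :
    Function.Injective F
    ∧ (∀ p : SimpleChainPair G k, Monotone (F p) ∧ F p (Fin.last k) = ⊤)
    ∧ (∀ C : Fin (k + 1) → Subgroup G, Monotone C → C (Fin.last k) = ⊤ → ∃ p, F p = C)
    ∧ (∀ p : SimpleChainPair G k, p.N = (F p 0).normalCore)
    ∧ (∀ p : SimpleChainPair G k, (p.chain 0).index = (F p 0).index) := by
  obtain rfl : F = SimpleChainPair.preimage := funext fun p => funext (hF p)
  exact ⟨SimpleChainPair.preimage_injective,
    fun p => ⟨p.monotone_preimage, p.preimage_last⟩,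
    fun C hmono htop => ⟨_, SimpleChainPair.preimage_ofChain C hmono htop⟩,
    SimpleChainPair.N_eq_normalCore_preimage_zero,
    SimpleChainPair.index_chain_zero⟩

/-- For a finite group `G`, the assignment sending a pair
`(N, K₀ ≤ ⋯ ≤ K_k = G/N)` — `N ⊴ G`, the chain simple — to the preimage chain
`π⁻¹(K₀) ≤ ⋯ ≤ π⁻¹(K_k) = G` is a bijection onto the set of all chains of subgroups of
`G` of length `k` ending in `G`; the inverse takes a chain to the normal core of its
smallest member together with the chain of images, and the bijection preserves the
total index: `[G/N : K₀] = [G : π⁻¹(K₀)]`. -/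
theorem simpleChainPair_bijection {G : Type*} [Group G] [Finite G] (k : ℕ)
    (F : SimpleChainPair G k → (Fin (k + 1) → Subgroup G))
    (hF : ∀ (p : SimpleChainPair G k) (i : Fin (k + 1)),
      F p i = (p.chain i).comap (QuotientGroup.mk' p.N)) :
    Function.Injective F
    ∧ (∀ p : SimpleChainPair G k, Monotone (F p) ∧ F p (Fin.last k) = ⊤)
    ∧ (∀ C : Fin (k + 1) → Subgroup G, Monotone C → C (Fin.last k) = ⊤ → ∃ p, F p = C)
    ∧ (∀ p : SimpleChainPair G k, p.N = (F p 0).normalCore)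
    ∧ (∀ p : SimpleChainPair G k, (p.chain 0).index = (F p 0).index) :=
  simpleChainPair_bijection_general k F hF
end

section
/- Let G be a finite group which is not cyclic of prime power order (i.e., G is not isomorphic to ℤ/p^k for any prime p and k ≥ 0). Then G possesses two maximal subgroups H and H' that are not conjugate in G, i.e., there is no g ∈ G with g·H·g⁻¹ = H'. -/
/-!
Let `M` be a maximal subgroup and suppose every maximal subgroup is conjugate to `M`. By Burnside's
lemma, the transitive action of `G` on `G ⧸ M` has a fixed-point-free element `x`, i.e. `x` lies in
no conjugate of `M`. Every element generating a proper subgroup lies in a maximal subgroup, hence in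
a conjugate of `M`; so `x` generates `G`. Then `G` is abelian and `M` is normal, so `x ^ p` and
`x ^ q` lie in `M` for any two primes `p ≠ q` dividing `|G|`, which forces `x ∈ M`.
-/

open Subgroup

namespace MulAction

variable {G X : Type*} [Group G] [MulAction G X]

theorem exists_fixedBy_eq_empty [Finite G] [Finite X] [Nontrivial X] [IsPretransitive G X] :
    ∃ g : G, fixedBy X g = ∅ := by
  classical
  have := Fintype.ofFinite G
  have := Fintype.ofFinite X
  by_contra! hfix
  have hone : Fintype.card (orbitRel.Quotient G X) = 1 := by
    have := (pretransitive_iff_subsingleton_quotient G X).1 inferInstance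
    exact (Fintype.card_le_one_iff_subsingleton.2 this).antisymm
      (Fintype.card_pos_iff.2 ⟨Quotient.mk _ (Classical.arbitrary X)⟩)
  have hburnside := sum_card_fixedBy_eq_card_orbits_mul_card_group G X
  rw [hone, one_mul] at hburnside
  have hlt : ∑ _g : G, 1 < ∑ g : G, Fintype.card (fixedBy X g) :=
    Finset.sum_lt_sum (fun g _ ↦ Fintype.card_pos_iff.2 (hfix g).to_subtype)
      ⟨1, Finset.mem_univ _, by simpa [fixedBy_one_eq_univ] using Fintype.one_lt_card⟩
  rw [hburnside, Finset.sum_const, Finset.card_univ, smul_eq_mul, mul_one] at hlt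
  exact hlt.false

end MulAction

namespace Subgroup

variable {G : Type*} [Group G]

theorem exists_forall_notMem_map_conj [Finite G] {H : Subgroup G} (hH : H ≠ ⊤) :
    ∃ x : G, ∀ g : G, x ∉ H.map (MulAut.conj g).toMonoidHom := by
  have : Nontrivial (G ⧸ H) := Finite.one_lt_card_iff_nontrivial.1 (one_lt_index_of_ne_top hH)
  obtain ⟨x, hx⟩ := MulAction.exists_fixedBy_eq_empty (G := G) (X := G ⧸ H)
  refine ⟨x, fun g hxg ↦ ?_⟩
  rw [← MulAction.stabilizer_quotient H, ← MulAction.stabilizer_smul_eq_stabilizer_map_conj] at hxg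
  exact (Set.eq_empty_iff_forall_notMem.1 hx) _ hxg

theorem mem_of_pow_mem_of_coprime {M : Subgroup G} {x : G} {a b : ℕ} (hab : a.Coprime b)
    (ha : x ^ a ∈ M) (hb : x ^ b ∈ M) : x ∈ M := by
  have hx : x = (x ^ a) ^ a.gcdA b * (x ^ b) ^ a.gcdB b := by
    rw [← zpow_natCast, ← zpow_natCast x b, ← zpow_mul, ← zpow_mul, ← zpow_add,
      ← Nat.gcd_eq_gcd_ab, hab, Nat.cast_one, zpow_one]
  rw [hx]
  exact mul_mem (zpow_mem ha _) (zpow_mem hb _)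

theorem zpowers_pow_ne_top [Finite G] (x : G) {n : ℕ} (hn : 1 < n) (hnG : n ∣ Nat.card G) :
    zpowers (x ^ n) ≠ ⊤ := by
  intro htop
  have hcard := orderOf_eq_card_of_zpowers_eq_top htop
  have hx : orderOf x = Nat.card G :=
    Nat.dvd_antisymm (_root_.orderOf_dvd_natCard x) (hcard ▸ orderOf_pow_dvd n)
  rw [orderOf_pow_of_dvd (by omega) (hx ▸ hnG), hx] at hcard
  exact (Nat.div_lt_self Nat.card_pos hn).ne hcard

end Subgroup

theorem Nat.exists_distinct_primes_dvd_of_not_prime_pow {n : ℕ} (hn : n ≠ 0)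
    (h : ¬ ∃ p k : ℕ, p.Prime ∧ n = p ^ k) :
    ∃ p q : ℕ, p.Prime ∧ q.Prime ∧ p ≠ q ∧ p ∣ n ∧ q ∣ n := by
  have hn2 : 2 ≤ n := by
    by_contra! hlt
    exact h ⟨2, 0, Nat.prime_two, by omega⟩
  have hpp : ¬ IsPrimePow n := by
    rw [isPrimePow_nat_iff]
    rintro ⟨p, k, hp, -, rfl⟩
    exact h ⟨p, k, hp, rfl⟩
  obtain ⟨p, hp, q, hq, hpq⟩ := (Nat.not_isPrimePow_iff_nontrivial_of_two_le hn2).1 hpp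
  rw [Finset.mem_coe, Nat.mem_primeFactors] at hp hq
  exact ⟨p, q, hp.1, hq.1, hpq, hp.2.1, hq.2.1⟩

/-- A finite group that is not cyclic of prime power order has two
maximal subgroups that are not conjugate. -/
theorem exists_nonconjugate_maximal_subgroups {G : Type*} [Group G] [Finite G]
    (hG : ¬ (IsCyclic G ∧ ∃ p k : ℕ, p.Prime ∧ Nat.card G = p ^ k)) :
    ∃ H H' : Subgroup G, IsCoatom H ∧ IsCoatom H' ∧
      ∀ g : G, Subgroup.map (MulAut.conj g).toMonoidHom H ≠ H' := by
  have : Nontrivial G := not_subsingleton_iff_nontrivial.1 fun _ ↦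
    hG ⟨isCyclic_of_subsingleton, 2, 0, Nat.prime_two, by simp [Nat.card_unique]⟩
  obtain ⟨M, hM, -⟩ := (eq_top_or_exists_le_coatom (⊥ : Subgroup G)).resolve_left bot_ne_top
  by_contra! hconj
  have hmem_conj : ∀ y : G, zpowers y ≠ ⊤ → ∃ g, y ∈ M.map (MulAut.conj g).toMonoidHom := by
    intro y hy
    obtain ⟨K, hK, hyK⟩ := (eq_top_or_exists_le_coatom (zpowers y)).resolve_left hy
    obtain ⟨g, rfl⟩ := hconj M K hM hK
    exact ⟨g, hyK (mem_zpowers y)⟩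
  obtain ⟨x, hx⟩ := exists_forall_notMem_map_conj hM.1
  have hgen : zpowers x = ⊤ := by
    by_contra h
    exact (hmem_conj x h).elim hx
  have : IsCyclic G := isCyclic_iff_exists_zpowers_eq_top.2 ⟨x, hgen⟩
  obtain ⟨p, q, hp, hq, hpq, hpG, hqG⟩ :=
    Nat.exists_distinct_primes_dvd_of_not_prime_pow Nat.card_pos.ne' fun h ↦ hG ⟨this, h⟩
  have hpow_mem : ∀ n, 1 < n → n ∣ Nat.card G → x ^ n ∈ M := by
    intro n hn hnG
    obtain ⟨g, hg⟩ := hmem_conj _ (zpowers_pow_ne_top x hn hnG)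
    rwa [MulEquiv.toMonoidHom_eq_coe, Normal.map_conj_eq] at hg
  refine hx 1 ?_
  rw [MulEquiv.toMonoidHom_eq_coe, Normal.map_conj_eq]
  exact mem_of_pow_mem_of_coprime ((Nat.coprime_primes hp hq).2 hpq)
    (hpow_mem p hp.one_lt hpG) (hpow_mem q hq.one_lt hqG)
end
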